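/- For 0 < a^β < a < 1 with β > 1, the Moser-Carleson-Chang tower μ_C on the interval C = [a^β, a] satisfies ‖∇μ_C‖₂² = 1 + (log β)/4. -/

import Mathlib

/-!
With `t = log r⁻¹` and `L = log a⁻¹`, the tower is `(2π)^{-1/2}` times `√(βL)` on `(0, a^β)`,
`√t` on `(a^β, a)` and `t / √L` on `(a, 1)`. Its energy density `μ'(r)² r` is therefore
`(2π)⁻¹` times `0`, `(4 r t)⁻¹` and `(r L)⁻¹` on these pieces, which are the derivatives of `0`,
`-¼ log t` and `log r / L`; these gain `0`, `¼ log β` and `1` across their pieces. The densities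
are nonnegative, so the fundamental theorem of calculus applies with no separate integrability
argument.
-/

open Real MeasureTheory Set

/-- The Moser-Carleson-Chang tower on the interval `C = [a^β, a]`:
`μ_C(r) = √(β log(1/a)/(2π))` for `r ≤ a^β`, `μ_C(r) = √(log(1/r)/(2π))` for
`a^β ≤ r ≤ a`, and `μ_C(r) = log(1/r)/√(2π log(1/a))` for `a ≤ r ≤ 1`. -/
noncomputable def towerInterval (a β : ℝ) : ℝ → ℝ := fun r =>
  (1 / Real.sqrt (2 * π)) *
    min (Real.sqrt (β * Real.log a⁻¹))
      (min (Real.sqrt (Real.log r⁻¹)) (Real.log r⁻¹ / Real.sqrt (Real.log a⁻¹)))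

theorem intervalIntegral.intervalIntegrable_and_integral_eq_sub_of_hasDerivAt_of_nonneg
    {f F : ℝ → ℝ} {p q : ℝ} (hpq : p ≤ q) (hF : ContinuousOn F (Icc p q)) (hF' : ∀ x ∈ Ioo p q, HasDerivAt F (f x) x)
    (hf : ∀ x ∈ Ioo p q, 0 ≤ f x) :
    IntervalIntegrable f volume p q ∧ ∫ x in p..q, f x = F q - F p := by
  have hint : IntervalIntegrable f volume p q :=
    (intervalIntegrable_iff_integrableOn_Ioc_of_le hpq).2
      (intervalIntegral.integrableOn_deriv_of_nonneg hF hF' hf)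
  exact ⟨hint, intervalIntegral.integral_eq_sub_of_hasDerivAt_of_le hpq hF hF' hint⟩

namespace Real

theorem log_inv_lt_log_inv {r s : ℝ} (hr : 0 < r) (hrs : r < s) : log s⁻¹ < log r⁻¹ := by
  rw [log_inv, log_inv, neg_lt_neg_iff]
  exact log_lt_log hr hrs

theorem log_inv_pos_of_lt_one {r : ℝ} (hr0 : 0 < r) (hr1 : r < 1) : 0 < log r⁻¹ := by
  simpa using log_inv_lt_log_inv hr0 hr1

theorem hasDerivAt_log_inv {x : ℝ} (hx : 0 < x) : HasDerivAt (fun y => log y⁻¹) (-x⁻¹) x := by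
  simp only [log_inv]
  exact (hasDerivAt_log hx.ne').neg

theorem log_inv_rpow {a : ℝ} (ha : 0 < a) (β : ℝ) : log (a ^ β)⁻¹ = β * log a⁻¹ := by
  rw [log_inv, log_rpow ha, log_inv, mul_neg]

theorem hasDerivAt_log_log_inv {x : ℝ} (hx0 : 0 < x) (hx1 : x < 1) :
    HasDerivAt (fun y => log (log y⁻¹)) (-(x * log x⁻¹)⁻¹) x := by
  convert (hasDerivAt_log_inv hx0).log (log_inv_pos_of_lt_one hx0 hx1).ne' using 1
  rw [mul_inv, neg_div, div_eq_mul_inv]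

theorem min_sqrt_div_sqrt_of_le {t L : ℝ} (hL : 0 < L) (ht : 0 ≤ t) (htL : t ≤ L) :
    min √t (t / √L) = t / √L := by
  refine min_eq_right ((div_le_iff₀ (sqrt_pos.2 hL)).2 ?_)
  calc t = √t * √t := (mul_self_sqrt ht).symm
    _ ≤ √t * √L := by gcongr

theorem min_sqrt_div_sqrt_of_ge {t L : ℝ} (hL : 0 < L) (htL : L ≤ t) :
    min √t (t / √L) = √t := by
  refine min_eq_left ((le_div_iff₀ (sqrt_pos.2 hL)).2 ?_)
  calc √t * √L ≤ √t * √t := by gcongr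
    _ = t := mul_self_sqrt (hL.le.trans htL)

end Real

noncomputable def towerProfile (a β r : ℝ) : ℝ :=
  min √(β * log a⁻¹) (min √(log r⁻¹) (log r⁻¹ / √(log a⁻¹)))

theorem towerInterval_eq_mul_towerProfile (a β : ℝ) :
    towerInterval a β = fun r => 1 / √(2 * π) * towerProfile a β r := rfl

section TowerProfile

variable {a β r : ℝ}

theorem towerProfile_of_log_inv_le (hL : 0 < log a⁻¹) (hβ : 1 ≤ β) (ht : 0 ≤ log r⁻¹)
    (htL : log r⁻¹ ≤ log a⁻¹) : towerProfile a β r = log r⁻¹ / √(log a⁻¹) := by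
  have hmin := min_sqrt_div_sqrt_of_le hL ht htL
  rw [towerProfile, hmin, min_eq_right]
  calc log r⁻¹ / √(log a⁻¹) ≤ √(log r⁻¹) := hmin ▸ min_le_left _ _
    _ ≤ √(β * log a⁻¹) := sqrt_le_sqrt (by nlinarith)

theorem towerProfile_of_log_inv_mem_Icc (hL : 0 < log a⁻¹)
    (ht : log r⁻¹ ∈ Icc (log a⁻¹) (β * log a⁻¹)) :
    towerProfile a β r = √(log r⁻¹) := by
  rw [towerProfile, min_sqrt_div_sqrt_of_ge hL ht.1, min_eq_right (sqrt_le_sqrt ht.2)]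

theorem towerProfile_of_le_log_inv (hL : 0 < log a⁻¹) (hβ : 1 ≤ β) (ht : β * log a⁻¹ ≤ log r⁻¹) :
    towerProfile a β r = √(β * log a⁻¹) := by
  rw [towerProfile, min_sqrt_div_sqrt_of_ge hL (by nlinarith), min_eq_left (sqrt_le_sqrt ht)]

theorem towerProfile_eqOn_Ioo_zero_rpow (ha0 : 0 < a) (ha1 : a < 1) (hβ : 1 ≤ β) :
    EqOn (towerProfile a β) (fun _ => √(β * log a⁻¹)) (Ioo 0 (a ^ β)) := fun r hr => by
  refine towerProfile_of_le_log_inv (log_inv_pos_of_lt_one ha0 ha1) hβ ?_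
  rw [← log_inv_rpow ha0]
  exact (log_inv_lt_log_inv hr.1 hr.2).le

theorem towerProfile_eqOn_Ioo_rpow_self (ha0 : 0 < a) (ha1 : a < 1) :
    EqOn (towerProfile a β) (fun r => √(log r⁻¹)) (Ioo (a ^ β) a) := fun r hr => by
  have hr0 : 0 < r := (rpow_pos_of_pos ha0 β).trans hr.1
  refine towerProfile_of_log_inv_mem_Icc (log_inv_pos_of_lt_one ha0 ha1)
    ⟨(log_inv_lt_log_inv hr0 hr.2).le, ?_⟩
  rw [← log_inv_rpow ha0]
  exact (log_inv_lt_log_inv (rpow_pos_of_pos ha0 β) hr.1).le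

theorem towerProfile_eqOn_Ioo_self_one (ha0 : 0 < a) (hβ : 1 ≤ β) :
    EqOn (towerProfile a β) (fun r => log r⁻¹ / √(log a⁻¹)) (Ioo a 1) := fun _ hr =>
  towerProfile_of_log_inv_le (log_inv_pos_of_lt_one ha0 (hr.1.trans hr.2)) hβ
    (log_inv_pos_of_lt_one (ha0.trans hr.1) hr.2).le (log_inv_lt_log_inv ha0 hr.1).le

theorem deriv_towerProfile_sq_mul_of_mem_Ioo_zero_rpow (ha0 : 0 < a) (ha1 : a < 1) (hβ : 1 ≤ β)
    (hr : r ∈ Ioo 0 (a ^ β)) : deriv (towerProfile a β) r ^ 2 * r = 0 := by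
  rw [((towerProfile_eqOn_Ioo_zero_rpow ha0 ha1 hβ).eventuallyEq_of_mem
    (isOpen_Ioo.mem_nhds hr)).deriv_eq, deriv_const]
  ring

theorem deriv_towerProfile_sq_mul_of_mem_Ioo_rpow_self (ha0 : 0 < a) (ha1 : a < 1)
    (hr : r ∈ Ioo (a ^ β) a) : deriv (towerProfile a β) r ^ 2 * r = (4 * r * log r⁻¹)⁻¹ := by
  have hr0 : 0 < r := (rpow_pos_of_pos ha0 β).trans hr.1
  have ht : 0 < log r⁻¹ := log_inv_pos_of_lt_one hr0 (hr.2.trans ha1)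
  rw [((towerProfile_eqOn_Ioo_rpow_self ha0 ha1).eventuallyEq_of_mem
      (isOpen_Ioo.mem_nhds hr)).deriv_eq,
    ((hasDerivAt_log_inv hr0).sqrt ht.ne').deriv, div_pow, mul_pow, sq_sqrt ht.le]
  field_simp
  norm_num

theorem deriv_towerProfile_sq_mul_of_mem_Ioo_self_one (ha0 : 0 < a) (hβ : 1 ≤ β)
    (hr : r ∈ Ioo a 1) : deriv (towerProfile a β) r ^ 2 * r = (r * log a⁻¹)⁻¹ := by
  have hr0 : 0 < r := ha0.trans hr.1
  have hL : 0 < log a⁻¹ := log_inv_pos_of_lt_one ha0 (hr.1.trans hr.2)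
  rw [((towerProfile_eqOn_Ioo_self_one ha0 hβ).eventuallyEq_of_mem
      (isOpen_Ioo.mem_nhds hr)).deriv_eq,
    ((hasDerivAt_log_inv hr0).div_const _).deriv, div_pow, sq_sqrt hL.le]
  field_simp

theorem integral_deriv_towerProfile_sq_mul_zero_rpow (ha0 : 0 < a) (ha1 : a < 1) (hβ : 1 ≤ β) :
    IntervalIntegrable (fun r => deriv (towerProfile a β) r ^ 2 * r) volume 0 (a ^ β) ∧
      ∫ r in (0 : ℝ)..a ^ β, deriv (towerProfile a β) r ^ 2 * r = 0 := by
  have h := intervalIntegral.intervalIntegrable_and_integral_eq_sub_of_hasDerivAt_of_nonneg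
    (F := fun _ => 0) (rpow_pos_of_pos ha0 β).le continuousOn_const
    (fun x hx => by
      rw [deriv_towerProfile_sq_mul_of_mem_Ioo_zero_rpow ha0 ha1 hβ hx]
      exact hasDerivAt_const _ _)
    (fun x hx => mul_nonneg (sq_nonneg _) hx.1.le)
  rwa [sub_self] at h

theorem integral_deriv_towerProfile_sq_mul_rpow_self (ha0 : 0 < a) (ha1 : a < 1) (hβ : 1 ≤ β) :
    IntervalIntegrable (fun r => deriv (towerProfile a β) r ^ 2 * r) volume (a ^ β) a ∧
      ∫ r in a ^ β..a, deriv (towerProfile a β) r ^ 2 * r = log β / 4 := by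
  have hb0 : 0 < a ^ β := rpow_pos_of_pos ha0 β
  have hba : a ^ β ≤ a := by simpa using rpow_le_rpow_of_exponent_ge ha0 ha1.le hβ
  have h := intervalIntegral.intervalIntegrable_and_integral_eq_sub_of_hasDerivAt_of_nonneg
    (F := fun r => -4⁻¹ * log (log r⁻¹)) hba
    (fun x hx => ((hasDerivAt_log_log_inv (hb0.trans_le hx.1) (hx.2.trans_lt ha1)).const_mul
      _).continuousAt.continuousWithinAt)
    (fun x hx => by
      rw [deriv_towerProfile_sq_mul_of_mem_Ioo_rpow_self ha0 ha1 hx]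
      exact ((hasDerivAt_log_log_inv (hb0.trans hx.1) (hx.2.trans ha1)).const_mul _).congr_deriv
        (by ring))
    (fun x hx => mul_nonneg (sq_nonneg _) (hb0.trans hx.1).le)
  refine ⟨h.1, h.2.trans ?_⟩
  rw [log_inv_rpow ha0, log_mul (by positivity) (log_inv_pos_of_lt_one ha0 ha1).ne']
  ring

theorem integral_deriv_towerProfile_sq_mul_self_one (ha0 : 0 < a) (ha1 : a < 1) (hβ : 1 ≤ β) :
    IntervalIntegrable (fun r => deriv (towerProfile a β) r ^ 2 * r) volume a 1 ∧
      ∫ r in a..1, deriv (towerProfile a β) r ^ 2 * r = 1 := by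
  have h := intervalIntegral.intervalIntegrable_and_integral_eq_sub_of_hasDerivAt_of_nonneg
    (F := fun r => log r / log a⁻¹) ha1.le
    (fun x hx => ((hasDerivAt_log (ha0.trans_le hx.1).ne').div_const
      _).continuousAt.continuousWithinAt)
    (fun x hx => by
      rw [deriv_towerProfile_sq_mul_of_mem_Ioo_self_one ha0 hβ hx, mul_inv, ← div_eq_mul_inv]
      exact (hasDerivAt_log (ha0.trans hx.1).ne').div_const _)
    (fun x hx => mul_nonneg (sq_nonneg _) (ha0.trans hx.1).le)
  refine ⟨h.1, h.2.trans ?_⟩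
  rw [log_one, zero_div, zero_sub, ← neg_div, ← log_inv,
    div_self (log_inv_pos_of_lt_one ha0 ha1).ne']

theorem integral_deriv_towerProfile_sq_mul (ha0 : 0 < a) (ha1 : a < 1) (hβ : 1 ≤ β) :
    ∫ r in (0 : ℝ)..1, deriv (towerProfile a β) r ^ 2 * r = 1 + log β / 4 := by
  obtain ⟨hi₁, e₁⟩ := integral_deriv_towerProfile_sq_mul_zero_rpow ha0 ha1 hβ
  obtain ⟨hi₂, e₂⟩ := integral_deriv_towerProfile_sq_mul_rpow_self ha0 ha1 hβ
  obtain ⟨hi₃, e₃⟩ := integral_deriv_towerProfile_sq_mul_self_one ha0 ha1 hβ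
  rw [← intervalIntegral.integral_add_adjacent_intervals (hi₁.trans hi₂) hi₃,
    ← intervalIntegral.integral_add_adjacent_intervals hi₁ hi₂, e₁, e₂, e₃]
  ring

end TowerProfile

/-- For `a ∈ (0,1)` and `β > 1` (so `0 < a^β < a < 1`), the tower on `C = [a^β, a]`
satisfies `‖∇μ_C‖₂² = 2π ∫_0^1 μ_C'(r)² r dr = 1 + (log β)/4`. -/
theorem towerInterval_energy (a β : ℝ) (ha0 : 0 < a) (ha1 : a < 1) (hβ : 1 < β) :
    2 * π * ∫ r in (0:ℝ)..1, (deriv (towerInterval a β) r) ^ 2 * r =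
      1 + Real.log β / 4 := by
  have hderiv : deriv (towerInterval a β) = fun r => 1 / √(2 * π) * deriv (towerProfile a β) r := by
    rw [towerInterval_eq_mul_towerProfile, deriv_const_mul_field']
  simp_rw [hderiv, mul_pow, mul_assoc]
  rw [intervalIntegral.integral_const_mul, integral_deriv_towerProfile_sq_mul ha0 ha1 hβ.le,
    div_pow, sq_sqrt (by positivity)]
  field_simp
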